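/- Let m, k ∈ ℕ, 1 ≤ p₁, p₂ ≤ ∞, 1 ≤ θ₁, θ₂ ≤ ∞, ν₁, ν₂ > 0, λ ∈ [0,1], and define p, θ by 1/p = (1−λ)/p₁ + λ/p₂ and 1/θ = (1−λ)/θ₁ + λ/θ₂. Let r̃ ∈ [1, m] and l̃ ∈ [1, k] be real numbers satisfying ν₁/ν₂ = r̃^{1/p₁−1/p₂} · l̃^{1/θ₁−1/θ₂}, and let r = ⌊r̃⌋ or r = ⌈r̃⌉ and l = ⌊l̃⌋ or l = ⌈l̃⌉. Then ν₁^{1−λ} ν₂^{λ} r^{−1/p} l^{−1/θ} V_{r,l}^{m,k} ⊆ 4 (ν₁ B_{p₁,θ₁}^{m,k} ∩ ν₂ B_{p₂,θ₂}^{m,k}). -/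

import Mathlib

open scoped ENNReal BigOperators Pointwise

noncomputable section

/-- The `ℓ_p` norm of a finite real vector, for `p ∈ [1,∞]`
(maximum when `p = ∞`). -/
def pVecNorm (p : ℝ≥0∞) {m : ℕ} (v : Fin m → ℝ) : ℝ :=
  if p = ∞ then ⨆ i, |v i|
  else (∑ i, |v i| ^ p.toReal) ^ (1 / p.toReal)

/-- The mixed `(p,θ)`-norm on `ℝ^{m×k}`: the inner index `i` ranges over `Fin m`,
the outer index `j` over `Fin k`. -/
def mixNorm (p θ : ℝ≥0∞) {m k : ℕ} (x : Fin m → Fin k → ℝ) : ℝ :=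
  if θ = ∞ then ⨆ j, pVecNorm p (fun i => x i j)
  else (∑ j, (pVecNorm p (fun i => x i j)) ^ θ.toReal) ^ (1 / θ.toReal)

/-- The closed unit ball `B_{p,θ}^{m,k}` of `l_{p,θ}^{m,k}`. -/
def mixBall (p θ : ℝ≥0∞) (m k : ℕ) : Set (Fin m → Fin k → ℝ) :=
  {x | mixNorm p θ x ≤ 1}

/-- The Kolmogorov `n`-width of a set `M ⊆ ℝ^{m×k}` in the space `l_{q,σ}^{m,k}`. -/
def kolWidth (q σ : ℝ≥0∞) {m k : ℕ} (n : ℕ) (M : Set (Fin m → Fin k → ℝ)) : ℝ :=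
  ⨅ L : {L : Submodule ℝ (Fin m → Fin k → ℝ) // Module.finrank ℝ L ≤ n},
    ⨆ x ∈ M, ⨅ y ∈ L.1, mixNorm q σ (x - y)

/-- The unit ball `B_{p,θ}^{m,k}` for finite real exponents `p, θ`. -/
def ballR (p θ : ℝ) (m k : ℕ) : Set (Fin m → Fin k → ℝ) :=
  mixBall (ENNReal.ofReal p) (ENNReal.ofReal θ) m k

/-- The Kolmogorov `n`-width in `l_{q,σ}^{m,k}` for finite real exponents `q, σ`. -/
def dW (q σ : ℝ) {m k : ℕ} (n : ℕ) (M : Set (Fin m → Fin k → ℝ)) : ℝ :=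
  kolWidth (ENNReal.ofReal q) (ENNReal.ofReal σ) n M

/-- The set `V_{r,l}^{m,k}`: the convex hull of all matrices obtained from the
`0/1` matrix `e^{m,k,r,l}` (with `1` exactly in the first `r` rows and first
`l` columns) by permuting rows and columns and changing signs of rows and columns. -/
def Vmk (m k r l : ℕ) : Set (Fin m → Fin k → ℝ) :=
  convexHull ℝ {x | ∃ (τ₁ : Equiv.Perm (Fin m)) (τ₂ : Equiv.Perm (Fin k))
    (ε₁ : Fin m → ℝ) (ε₂ : Fin k → ℝ),
    (∀ i, ε₁ i = 1 ∨ ε₁ i = -1) ∧ (∀ j, ε₂ j = 1 ∨ ε₂ j = -1) ∧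
    ∀ i j, x i j = ε₁ i * ε₂ j * (if (τ₁ i : ℕ) < r ∧ (τ₂ j : ℕ) < l then 1 else 0)}


/-! Each generator `γ(e^{m,k,r,l})` has entries of modulus at most `1`, supported in at most `r`
rows and `l` columns, so its `(p,θ)`-norm is at most `r^{1/p} l^{1/θ}`; the mixed norm is the norm
of a nested `PiLp` space, hence convex, and the bound passes to the convex hull `V_{r,l}^{m,k}`.
With `c = ν₁^{1-λ} ν₂^λ r^{-1/p} l^{-1/θ}`, the balance condition on `ν₁/ν₂` turns
`c r^{1/p₁} l^{1/θ₁}` into `ν₁ (r/r̃)^{λ(1/p₁-1/p₂)} (l/l̃)^{λ(1/θ₁-1/θ₂)}`. Rounding keeps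
`r/r̃` and `l/l̃` in `[1/2, 2]` and the exponents lie in `[-1, 1]`, so each factor is at most `2`.
Exchanging the indices `1, 2` (and `λ` with `1 - λ`) gives the bound by `4 ν₂`. -/

open Finset

theorem PiLp.norm_le_card_rpow_mul {ι : Type*} [Fintype ι] {β : ι → Type*}
    [∀ i, SeminormedAddCommGroup (β i)] {p : ℝ≥0∞} (hp : p ≠ 0) (f : PiLp p β)
    (s : Finset ι) (hfs : ∀ i ∉ s, f i = 0) {C : ℝ} (hC0 : 0 ≤ C) (hC : ∀ i, ‖f i‖ ≤ C) :
    ‖f‖ ≤ (#s : ℝ) ^ p⁻¹.toReal * C := by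
  rcases eq_or_ne p ∞ with rfl | hp_top
  · simpa [PiLp.norm_eq_ciSup] using Real.iSup_le hC hC0
  have hq : 0 < p.toReal := ENNReal.toReal_pos hp hp_top
  have hsum : ∑ i, ‖f i‖ ^ p.toReal ≤ #s * C ^ p.toReal := calc
    ∑ i, ‖f i‖ ^ p.toReal = ∑ i ∈ s, ‖f i‖ ^ p.toReal :=
      (sum_subset (subset_univ s) fun i _ hi => by simp [hfs i hi, hq.ne']).symm
    _ ≤ ∑ _i ∈ s, C ^ p.toReal := by gcongr with i; exact hC i
    _ = #s * C ^ p.toReal := by rw [sum_const, nsmul_eq_mul]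
  rw [PiLp.norm_eq_sum hq, ENNReal.toReal_inv, ← one_div]
  calc (∑ i, ‖f i‖ ^ p.toReal) ^ (1 / p.toReal)
      ≤ (#s * C ^ p.toReal) ^ (1 / p.toReal) := by gcongr
    _ = (#s : ℝ) ^ (1 / p.toReal) * C := by
      rw [Real.mul_rpow (by positivity) (by positivity), ← Real.rpow_mul hC0,
        mul_one_div_cancel hq.ne', Real.rpow_one]

theorem pVecNorm_norm_eq_norm {m : ℕ} {β : Fin m → Type*} [∀ i, SeminormedAddGroup (β i)]
    {p : ℝ≥0∞} (hp : p ≠ 0) (f : PiLp p β) : pVecNorm p (fun i => ‖f i‖) = ‖f‖ := by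
  simp only [pVecNorm]
  change _ = if p = 0 then _ else _
  simp only [if_neg hp, abs_norm]

theorem card_filter_lt_le_of_injective {α : Type*} [Fintype α] {f : α → ℕ}
    (hf : Function.Injective f) (r : ℕ) : #{a | f a < r} ≤ r :=
  (card_le_card_of_injOn f (fun a ha => by simpa using ha) hf.injOn).trans_eq (card_range r)

section MixNorm

variable {p θ : ℝ≥0∞} {m k : ℕ}

variable (p θ m k) in
def toMixLp :
    (Fin m → Fin k → ℝ) →ₗ[ℝ] PiLp θ (fun _ : Fin k => PiLp p (fun _ : Fin m => ℝ)) where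
  toFun x := WithLp.toLp θ fun j => WithLp.toLp p fun i => x i j
  map_add' _ _ := rfl
  map_smul' _ _ := rfl

variable [Fact (1 ≤ p)] [Fact (1 ≤ θ)]

theorem mixNorm_eq_norm_toMixLp (x : Fin m → Fin k → ℝ) :
    mixNorm p θ x = ‖toMixLp p θ m k x‖ := by
  have hcol : ∀ j, pVecNorm p (fun i => x i j) = ‖WithLp.toLp p fun i => x i j‖ := fun j => by
    rw [← pVecNorm_norm_eq_norm (one_pos.trans_le (Fact.out : 1 ≤ p)).ne']
    simp only [Real.norm_eq_abs, pVecNorm, abs_abs]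
  rw [mixNorm, ← pVecNorm_norm_eq_norm (one_pos.trans_le (Fact.out : 1 ≤ θ)).ne', pVecNorm]
  simp only [hcol, abs_norm]
  rfl

theorem convex_setOf_mixNorm_le (C : ℝ) :
    Convex ℝ {x : Fin m → Fin k → ℝ | mixNorm p θ x ≤ C} := by
  simpa only [mixNorm_eq_norm_toMixLp, Set.preimage, mem_closedBall_zero_iff] using
    (convex_closedBall (0 : PiLp θ fun _ : Fin k => PiLp p fun _ : Fin m => ℝ) C).linear_preimage
      (toMixLp p θ m k)

theorem mixNorm_smul (c : ℝ) (x : Fin m → Fin k → ℝ) :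
    mixNorm p θ (c • x) = |c| * mixNorm p θ x := by
  rw [mixNorm_eq_norm_toMixLp, map_smul, norm_smul, Real.norm_eq_abs, mixNorm_eq_norm_toMixLp]

theorem smul_mixBall {ν : ℝ} (hν : 0 < ν) :
    ν • mixBall p θ m k = {x | mixNorm p θ x ≤ ν} := by
  ext x
  simp only [Set.mem_smul_set_iff_inv_smul_mem₀ hν.ne', mixBall, Set.mem_ofPred_eq, mixNorm_smul,
    abs_inv, abs_of_pos hν, inv_mul_le_iff₀ hν, mul_one]

theorem mixNorm_le_card_rpow_mul (x : Fin m → Fin k → ℝ) (S : Finset (Fin m))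
    (T : Finset (Fin k)) (hx : ∀ i j, |x i j| ≤ 1) (hST : ∀ i j, x i j ≠ 0 → i ∈ S ∧ j ∈ T) :
    mixNorm p θ x ≤ (#S : ℝ) ^ p⁻¹.toReal * (#T : ℝ) ^ θ⁻¹.toReal := by
  have hcol : ∀ j, ‖toMixLp p θ m k x j‖ ≤ (#S : ℝ) ^ p⁻¹.toReal := fun j => by
    simpa using PiLp.norm_le_card_rpow_mul (one_pos.trans_le (Fact.out : 1 ≤ p)).ne'
      (toMixLp p θ m k x j) S (fun i hi => by_contra fun h => hi (hST i j h).1) zero_le_one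
      (fun i => hx i j)
  rw [mixNorm_eq_norm_toMixLp, mul_comm]
  refine PiLp.norm_le_card_rpow_mul (one_pos.trans_le (Fact.out : 1 ≤ θ)).ne' _ T
    (fun j hj => ?_) (by positivity) hcol
  ext i
  by_contra h
  exact hj (hST i j h).2

theorem mixNorm_le_of_mem_Vmk {r l : ℕ} {x : Fin m → Fin k → ℝ} (hx : x ∈ Vmk m k r l) :
    mixNorm p θ x ≤ (r : ℝ) ^ p⁻¹.toReal * (l : ℝ) ^ θ⁻¹.toReal := by
  refine convexHull_min ?_ (convex_setOf_mixNorm_le _) hx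
  rintro z ⟨τ₁, τ₂, ε₁, ε₂, hε₁, hε₂, hz⟩
  have hz_abs : ∀ i j, |z i j| ≤ 1 := fun i j => by
    rw [hz]
    rcases hε₁ i with h₁ | h₁ <;> rcases hε₂ j with h₂ | h₂ <;> split_ifs <;> simp [h₁, h₂]
  have hz_supp : ∀ i j, z i j ≠ 0 →
      i ∈ ({i | (τ₁ i : ℕ) < r} : Finset _) ∧ j ∈ ({j | (τ₂ j : ℕ) < l} : Finset _) :=
    fun i j h => by
      rw [hz] at h
      split_ifs at h with hij
      · simpa using hij
      · simp at h
  calc mixNorm p θ z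
      ≤ (#{i | (τ₁ i : ℕ) < r} : ℝ) ^ p⁻¹.toReal * (#{j | (τ₂ j : ℕ) < l} : ℝ) ^ θ⁻¹.toReal :=
        mixNorm_le_card_rpow_mul z _ _ hz_abs hz_supp
    _ ≤ (r : ℝ) ^ p⁻¹.toReal * (l : ℝ) ^ θ⁻¹.toReal := by
        gcongr <;> exact_mod_cast
          card_filter_lt_le_of_injective (Fin.val_injective.comp (Equiv.injective _)) _

theorem smul_Vmk_subset_smul_mixBall {r l : ℕ} {c ν : ℝ} (hc : 0 ≤ c) (hν : 0 < ν)
    (h : c * ((r : ℝ) ^ p⁻¹.toReal * (l : ℝ) ^ θ⁻¹.toReal) ≤ ν) :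
    c • Vmk m k r l ⊆ ν • mixBall p θ m k := by
  rintro _ ⟨x, hx, rfl⟩
  rw [smul_mixBall hν, Set.mem_ofPred_eq, mixNorm_smul, abs_of_nonneg hc]
  exact (mul_le_mul_of_nonneg_left (mixNorm_le_of_mem_Vmk hx) hc).trans h

end MixNorm

theorem rpow_le_two_of_mem_Icc {x s : ℝ} (hx : x ∈ Set.Icc 2⁻¹ 2) (hs : |s| ≤ 1) :
    x ^ s ≤ 2 := by
  have hx0 : 0 < x := lt_of_lt_of_le (by norm_num) hx.1
  rcases le_total 1 x with h | h
  · calc x ^ s ≤ x ^ (1 : ℝ) := Real.rpow_le_rpow_of_exponent_le h ((le_abs_self s).trans hs)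
      _ ≤ 2 := by simpa using hx.2
  · calc x ^ s ≤ x ^ (-1 : ℝ) :=
          Real.rpow_le_rpow_of_exponent_ge hx0 h (by linarith [neg_abs_le s])
      _ ≤ 2 := by rw [Real.rpow_neg_one, inv_le_comm₀ hx0 two_pos]; exact hx.1

theorem natCast_div_mem_Icc_of_eq_floor_or_ceil {s : ℝ} (hs : 1 ≤ s) {n : ℕ}
    (hn : (n : ℤ) = ⌊s⌋ ∨ (n : ℤ) = ⌈s⌉) : (n : ℝ) / s ∈ Set.Icc 2⁻¹ 2 := by
  have hn_near : 1 ≤ (n : ℝ) ∧ (n : ℝ) < s + 1 ∧ s < n + 1 := by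
    rcases hn with h | h
    · have h1 : (1 : ℤ) ≤ n := h ▸ Int.le_floor.mpr (by exact_mod_cast hs)
      have h2 := Int.floor_le s
      have h3 := Int.lt_floor_add_one s
      rw [← h] at h2 h3
      push_cast at h2 h3
      exact ⟨by exact_mod_cast h1, by linarith, h3⟩
    · have h2 := Int.le_ceil s
      have h3 := Int.ceil_lt_add_one s
      rw [← h] at h2 h3
      push_cast at h2 h3
      exact ⟨hs.trans h2, h3, by linarith⟩
  have hs0 : 0 < s := one_pos.trans_le hs
  constructor
  · rw [le_div_iff₀ hs0]; linarith
  · rw [div_le_iff₀ hs0]; linarith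

theorem interpolation_factor_le {ν₁ ν₂ rt lt r l a₁ a₂ b₁ b₂ s t : ℝ} (hν₁ : 0 < ν₁)
    (hν₂ : 0 < ν₂) (hrt : 0 < rt) (hlt : 0 < lt) (hr : r / rt ∈ Set.Icc 2⁻¹ 2)
    (hl : l / lt ∈ Set.Icc 2⁻¹ 2) (ha₁ : a₁ ∈ Set.Icc 0 1) (ha₂ : a₂ ∈ Set.Icc 0 1)
    (hb₁ : b₁ ∈ Set.Icc 0 1) (hb₂ : b₂ ∈ Set.Icc 0 1) (hs : 0 ≤ s) (ht : 0 ≤ t) (hst : s + t = 1)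
    (hν : ν₁ / ν₂ = rt ^ (a₁ - a₂) * lt ^ (b₁ - b₂)) :
    ν₁ ^ s * ν₂ ^ t * r ^ (-(s * a₁ + t * a₂)) * l ^ (-(s * b₁ + t * b₂)) * (r ^ a₁ * l ^ b₁)
      ≤ 4 * ν₁ := by
  have hr0 : 0 < r := (div_pos_iff_of_pos_right hrt).mp (lt_of_lt_of_le (by norm_num) hr.1)
  have hl0 : 0 < l := (div_pos_iff_of_pos_right hlt).mp (lt_of_lt_of_le (by norm_num) hl.1)
  have hlog : Real.log ν₁ - Real.log ν₂
      = (a₁ - a₂) * Real.log rt + (b₁ - b₂) * Real.log lt := by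
    have := congrArg Real.log hν
    rwa [Real.log_div hν₁.ne' hν₂.ne', Real.log_mul (by positivity) (by positivity),
      Real.log_rpow hrt, Real.log_rpow hlt] at this
  have hsplit : ν₁ ^ s * ν₂ ^ t * r ^ (-(s * a₁ + t * a₂)) * l ^ (-(s * b₁ + t * b₂))
      * (r ^ a₁ * l ^ b₁) = ν₁ * ((r / rt) ^ (t * (a₁ - a₂)) * (l / lt) ^ (t * (b₁ - b₂))) := by
    conv_rhs => rw [← Real.exp_log hν₁]
    simp only [Real.rpow_def_of_pos, hν₁, hν₂, hr0, hl0, div_pos, hrt, hlt,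
      Real.log_div hr0.ne' hrt.ne', Real.log_div hl0.ne' hlt.ne', ← Real.exp_add]
    congr 1
    linear_combination (-t) * hlog + (Real.log ν₁ - a₁ * Real.log r - b₁ * Real.log l) * hst
  have hexp : ∀ {c d : ℝ}, c ∈ Set.Icc 0 1 → d ∈ Set.Icc 0 1 → |t * (c - d)| ≤ 1 :=
    fun hc hd => by
      rw [abs_mul, abs_of_nonneg ht]
      exact mul_le_one₀ (by linarith) (abs_nonneg _)
        (abs_sub_le_of_nonneg_of_le hc.1 hc.2 hd.1 hd.2)
  rw [hsplit]
  calc ν₁ * ((r / rt) ^ (t * (a₁ - a₂)) * (l / lt) ^ (t * (b₁ - b₂))) ≤ ν₁ * (2 * 2) := by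
        gcongr
        · exact rpow_le_two_of_mem_Icc hr (hexp ha₁ ha₂)
        · exact rpow_le_two_of_mem_Icc hl (hexp hb₁ hb₂)
    _ = 4 * ν₁ := by ring

theorem ENNReal.toReal_inv_eq_of_inv_eq {p p₁ p₂ : ℝ≥0∞} (hp₁ : p₁ ≠ 0) (hp₂ : p₂ ≠ 0) {t : ℝ}
    (ht : t ∈ Set.Icc 0 1) (hp : p⁻¹ = ENNReal.ofReal (1 - t) * p₁⁻¹ + ENNReal.ofReal t * p₂⁻¹) :
    p⁻¹.toReal = (1 - t) * p₁⁻¹.toReal + t * p₂⁻¹.toReal := by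
  have hp₁' := ENNReal.inv_ne_top.mpr hp₁
  have hp₂' := ENNReal.inv_ne_top.mpr hp₂
  rw [hp, ENNReal.toReal_add (by finiteness) (by finiteness), ENNReal.toReal_mul,
    ENNReal.toReal_mul, ENNReal.toReal_ofReal (by linarith [ht.2]), ENNReal.toReal_ofReal ht.1]

theorem ENNReal.toReal_inv_mem_Icc {p : ℝ≥0∞} (hp : 1 ≤ p) : p⁻¹.toReal ∈ Set.Icc 0 1 :=
  ⟨ENNReal.toReal_nonneg,
    ENNReal.toReal_le_of_le_ofReal zero_le_one (by simpa using ENNReal.inv_le_one.mpr hp)⟩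

/-- Lemma 2: if `ν₁/ν₂ = r̃^{1/p₁−1/p₂}·l̃^{1/θ₁−1/θ₂}` with `r̃ ∈ [1,m]`,
`l̃ ∈ [1,k]`, and `r, l` are obtained from `r̃, l̃` by rounding up or down, then
`ν₁^{1−λ}ν₂^{λ} r^{−1/p} l^{−1/θ} V_{r,l}^{m,k} ⊆ 4(ν₁B_{p₁,θ₁}^{m,k} ∩ ν₂B_{p₂,θ₂}^{m,k})`,
where `1/p = (1−λ)/p₁ + λ/p₂`, `1/θ = (1−λ)/θ₁ + λ/θ₂`. -/
theorem stmt_7 (m k : ℕ) (p₁ p₂ θ₁ θ₂ p θ : ℝ≥0∞)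
    (hp₁ : 1 ≤ p₁) (hp₂ : 1 ≤ p₂) (hθ₁ : 1 ≤ θ₁) (hθ₂ : 1 ≤ θ₂)
    (ν₁ ν₂ : ℝ) (hν₁ : 0 < ν₁) (hν₂ : 0 < ν₂)
    (t : ℝ) (ht : t ∈ Set.Icc (0:ℝ) 1)
    (hp : p⁻¹ = ENNReal.ofReal (1 - t) * p₁⁻¹ + ENNReal.ofReal t * p₂⁻¹)
    (hθ : θ⁻¹ = ENNReal.ofReal (1 - t) * θ₁⁻¹ + ENNReal.ofReal t * θ₂⁻¹)
    (rt lt : ℝ) (hrt : rt ∈ Set.Icc (1:ℝ) (m : ℝ)) (hlt : lt ∈ Set.Icc (1:ℝ) (k : ℝ))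
    (hν : ν₁ / ν₂ = rt ^ (p₁⁻¹.toReal - p₂⁻¹.toReal) * lt ^ (θ₁⁻¹.toReal - θ₂⁻¹.toReal))
    (r l : ℕ) (hr : (r : ℤ) = ⌊rt⌋ ∨ (r : ℤ) = ⌈rt⌉) (hl : (l : ℤ) = ⌊lt⌋ ∨ (l : ℤ) = ⌈lt⌉) :
    (ν₁ ^ (1 - t) * ν₂ ^ t * (r : ℝ) ^ (-(p⁻¹.toReal)) * (l : ℝ) ^ (-(θ⁻¹.toReal)))
        • Vmk m k r l ⊆
      (4 : ℝ) • ((ν₁ • mixBall p₁ θ₁ m k) ∩ (ν₂ • mixBall p₂ θ₂ m k)) := by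
  have : Fact (1 ≤ p₁) := ⟨hp₁⟩
  have : Fact (1 ≤ p₂) := ⟨hp₂⟩
  have : Fact (1 ≤ θ₁) := ⟨hθ₁⟩
  have : Fact (1 ≤ θ₂) := ⟨hθ₂⟩
  have hp_toReal := ENNReal.toReal_inv_eq_of_inv_eq (one_pos.trans_le hp₁).ne'
    (one_pos.trans_le hp₂).ne' ht hp
  have hθ_toReal := ENNReal.toReal_inv_eq_of_inv_eq (one_pos.trans_le hθ₁).ne'
    (one_pos.trans_le hθ₂).ne' ht hθ
  have hrt0 : 0 < rt := by linarith [hrt.1]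
  have hlt0 : 0 < lt := by linarith [hlt.1]
  have hν' : ν₂ / ν₁ = rt ^ (p₂⁻¹.toReal - p₁⁻¹.toReal) * lt ^ (θ₂⁻¹.toReal - θ₁⁻¹.toReal) := by
    rw [← inv_div, hν, mul_inv, ← Real.rpow_neg hrt0.le, ← Real.rpow_neg hlt0.le, neg_sub,
      neg_sub]
  have hr_ratio := natCast_div_mem_Icc_of_eq_floor_or_ceil hrt.1 hr
  have hl_ratio := natCast_div_mem_Icc_of_eq_floor_or_ceil hlt.1 hl
  rw [Set.smul_set_inter₀ four_ne_zero, smul_smul, smul_smul]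
  refine Set.subset_inter (smul_Vmk_subset_smul_mixBall (by positivity) (by positivity) ?_)
    (smul_Vmk_subset_smul_mixBall (by positivity) (by positivity) ?_)
  · rw [hp_toReal, hθ_toReal]
    exact interpolation_factor_le hν₁ hν₂ hrt0 hlt0 hr_ratio hl_ratio
      (ENNReal.toReal_inv_mem_Icc hp₁) (ENNReal.toReal_inv_mem_Icc hp₂)
      (ENNReal.toReal_inv_mem_Icc hθ₁) (ENNReal.toReal_inv_mem_Icc hθ₂) (by linarith [ht.2]) ht.1
      (by ring) hν
  · convert interpolation_factor_le (s := t) (t := 1 - t) hν₂ hν₁ hrt0 hlt0 hr_ratio hl_ratio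
      (ENNReal.toReal_inv_mem_Icc hp₂) (ENNReal.toReal_inv_mem_Icc hp₁)
      (ENNReal.toReal_inv_mem_Icc hθ₂) (ENNReal.toReal_inv_mem_Icc hθ₁) ht.1 (by linarith [ht.2])
      (by ring) hν' using 2
    rw [hp_toReal, hθ_toReal]
    ring_nf
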